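/- The real symplectic group Sp(2g, ℝ) is generated by the subgroups N₊ = { [[I, x],[0, I]] : x a real symmetric g×g matrix } and N₋ = { [[I, 0],[x, I]] : x a real symmetric g×g matrix }. -/

import Mathlib

/-!
Write `n₊(x) = [[1, x], [0, 1]]` and `n₋(x) = [[1, 0], [x, 1]]`. For a symmetric invertible `u`,
`n₊(u) n₋(-u⁻¹) n₊(u) = [[0, u], [-u⁻¹, 0]] =: s(u)`, and `s(u) s(-v) = diag(u v⁻¹, (u v⁻¹)⁻ᵀ)`.
Invertible diagonal matrices `D = D · 1⁻¹` and transvections `T = (T P) P⁻¹`, with `P` the matrix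
of a transposition, are of the form `u v⁻¹`; as they generate `GL`, every `diag(A, A⁻ᵀ)` is a
product of unipotents. A symplectic matrix whose upper left block `A` is invertible factors as
`n₋(C A⁻¹) · diag(A, A⁻ᵀ) · n₊(A⁻¹ B)`. Finally, right multiplication by `n₋(t)` replaces `A` by
`A + t B`, and `det (A + t B)` is a nonzero polynomial in `t`: the relation `A Bᵀ = B Aᵀ` gives
`(A + i B)(A - i B)ᵀ = A Aᵀ + B Bᵀ`, which is positive definite.
-/

open Matrix Polynomial

namespace Matrix

variable {l R : Type*} [DecidableEq l] [Fintype l] [CommRing R]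

theorem IsSymm.fromBlocks_upper_mem_symplecticGroup {x : Matrix l l R} (hx : x.IsSymm) :
    Matrix.fromBlocks 1 x 0 1 ∈ symplecticGroup l R := by
  simp [SymplecticGroup.mem_iff, J, fromBlocks_transpose, fromBlocks_multiply, hx.eq]

theorem IsSymm.fromBlocks_lower_mem_symplecticGroup {x : Matrix l l R} (hx : x.IsSymm) :
    Matrix.fromBlocks 1 0 x 1 ∈ symplecticGroup l R := by
  simp [SymplecticGroup.mem_iff, J, fromBlocks_transpose, fromBlocks_multiply, hx.eq]

theorem eval₂_det_add_X_smul {R S : Type*} [CommRing R] [CommRing S] (φ : R →+* S) (z : S)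
    (A B : Matrix l l R) :
    (A.map C + (X : R[X]) • B.map C).det.eval₂ φ z = (A.map φ + z • B.map φ).det := by
  rw [← coe_eval₂RingHom, RingHom.map_det]
  congr 1
  ext i j
  simp only [RingHom.mapMatrix_apply, map_apply, add_apply, smul_apply, smul_eq_mul,
    coe_eval₂RingHom, eval₂_add, eval₂_mul, eval₂_X, eval₂_C]

section Blocks

variable {A B C D : Matrix l l R}

theorem transpose_mul_eq_of_fromBlocks_mem_symplecticGroup
    (h : fromBlocks A B C D ∈ symplecticGroup l R) :
    Aᵀ * C = Cᵀ * A ∧ Aᵀ * D - Cᵀ * B = 1 := by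
  rw [SymplecticGroup.mem_iff', J, fromBlocks_transpose, fromBlocks_multiply,
    fromBlocks_multiply] at h
  obtain ⟨h₁₁, h₁₂, -, -⟩ := fromBlocks_inj.mp h
  simp only [mul_zero, mul_one, mul_neg, neg_mul, add_zero, zero_add] at h₁₁ h₁₂
  exact ⟨(add_neg_eq_zero.mp h₁₁).symm, by linear_combination (norm := abel) -h₁₂⟩

theorem mul_transpose_comm_of_fromBlocks_mem_symplecticGroup
    (h : fromBlocks A B C D ∈ symplecticGroup l R) : A * Bᵀ = B * Aᵀ := by
  rw [SymplecticGroup.mem_iff, J, fromBlocks_transpose, fromBlocks_multiply,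
    fromBlocks_multiply] at h
  obtain ⟨h₁₁, -, -, -⟩ := fromBlocks_inj.mp h
  simp only [mul_zero, mul_one, mul_neg, neg_mul, add_zero, zero_add] at h₁₁
  exact (add_neg_eq_zero.mp h₁₁).symm

theorem isSymm_mul_inv_of_transpose_mul_comm (hA : IsUnit A.det) (h : Aᵀ * C = Cᵀ * A) :
    (C * A⁻¹).IsSymm :=
  calc (C * A⁻¹)ᵀ = (A⁻¹)ᵀ * (Cᵀ * A) * A⁻¹ := by
        rw [transpose_mul, Matrix.mul_assoc, mul_nonsing_inv_cancel_right _ _ hA]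
    _ = (A * A⁻¹)ᵀ * C * A⁻¹ := by
        rw [← h, transpose_mul]; simp only [Matrix.mul_assoc]
    _ = C * A⁻¹ := by rw [mul_nonsing_inv _ hA, transpose_one, Matrix.one_mul]

theorem fromBlocks_eq_lower_mul_mul_upper (hA : IsUnit A.det) (hAC : Aᵀ * C = Cᵀ * A)
    (hAD : Aᵀ * D - Cᵀ * B = 1) :
    fromBlocks A B C D =
      fromBlocks 1 0 (C * A⁻¹) 1 * fromBlocks A 0 0 (A⁻¹)ᵀ * fromBlocks 1 (A⁻¹ * B) 0 1 := by
  have hD : D = C * A⁻¹ * B + (A⁻¹)ᵀ :=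
    calc D = (A⁻¹)ᵀ * (Aᵀ * D) := by
          rw [← Matrix.mul_assoc, ← transpose_mul, mul_nonsing_inv _ hA, transpose_one,
            Matrix.one_mul]
      _ = (C * A⁻¹)ᵀ * B + (A⁻¹)ᵀ := by
          rw [sub_eq_iff_eq_add.mp hAD, Matrix.mul_add, Matrix.mul_one, transpose_mul,
            Matrix.mul_assoc, add_comm]
      _ = C * A⁻¹ * B + (A⁻¹)ᵀ := by rw [(isSymm_mul_inv_of_transpose_mul_comm hA hAC).eq]
  simp [fromBlocks_multiply, hD, Matrix.mul_assoc, nonsing_inv_mul _ hA,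
    mul_nonsing_inv_cancel_left _ _ hA]

end Blocks

variable (l R) in
def symmUnipotentClosure : Submonoid (Matrix (l ⊕ l) (l ⊕ l) R) :=
  Submonoid.closure {M | ∃ x : Matrix l l R, x.IsSymm ∧
    (M = fromBlocks 1 x 0 1 ∨ M = fromBlocks 1 0 x 1)}

theorem IsSymm.fromBlocks_upper_mem_symmUnipotentClosure {x : Matrix l l R} (hx : x.IsSymm) :
    Matrix.fromBlocks 1 x 0 1 ∈ symmUnipotentClosure l R :=
  Submonoid.subset_closure ⟨x, hx, .inl rfl⟩

theorem IsSymm.fromBlocks_lower_mem_symmUnipotentClosure {x : Matrix l l R} (hx : x.IsSymm) :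
    Matrix.fromBlocks 1 0 x 1 ∈ symmUnipotentClosure l R :=
  Submonoid.subset_closure ⟨x, hx, .inr rfl⟩

theorem fromBlocks_zero_inv_mem_symmUnipotentClosure {u : Matrix l l R} (hu : u.IsSymm)
    (hdet : IsUnit u.det) : fromBlocks 0 u (-u⁻¹) 0 ∈ symmUnipotentClosure l R := by
  have hu' : (-u⁻¹).IsSymm := by
    rw [IsSymm, transpose_neg, transpose_nonsing_inv, hu.eq]
  have := mul_mem (mul_mem hu.fromBlocks_upper_mem_symmUnipotentClosure
    hu'.fromBlocks_lower_mem_symmUnipotentClosure) hu.fromBlocks_upper_mem_symmUnipotentClosure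
  convert this using 1
  simp [fromBlocks_multiply, mul_nonsing_inv _ hdet, nonsing_inv_mul _ hdet]

theorem fromBlocks_mul_inv_mem_symmUnipotentClosure {u v : Matrix l l R} (hu : u.IsSymm)
    (hv : v.IsSymm) (hdu : IsUnit u.det) (hdv : IsUnit v.det) :
    fromBlocks (u * v⁻¹) 0 0 ((u * v⁻¹)⁻¹)ᵀ ∈ symmUnipotentClosure l R := by
  have hinv : (-v)⁻¹ = -v⁻¹ := inv_eq_right_inv (by simp [mul_nonsing_inv _ hdv])
  have hdv' : IsUnit (-v).det :=
    isUnit_det_of_right_inverse (B := -v⁻¹) (by simp [mul_nonsing_inv _ hdv])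
  convert mul_mem (fromBlocks_zero_inv_mem_symmUnipotentClosure hu hdu)
    (fromBlocks_zero_inv_mem_symmUnipotentClosure hv.neg hdv') using 1
  simp [fromBlocks_multiply, hinv, Matrix.mul_inv_rev, nonsing_inv_nonsing_inv _ hdv,
    transpose_mul, transpose_nonsing_inv, hu.eq, hv.eq]

section Field

variable {K : Type*} [Field K]

theorem isSymm_transvection_mul_swap (i j : l) (c : K) :
    (transvection i j c * (Equiv.swap i j).permMatrix K).IsSymm := by
  have h : transvection i j c * (Equiv.swap i j).permMatrix K =
      (Equiv.swap i j).permMatrix K + single i i c := by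
    rw [transvection, Matrix.add_mul, Matrix.one_mul, PEquiv.mul_toMatrix_toPEquiv]
    congr 1
    ext a b
    simp [single_apply, eq_comm (a := j), Equiv.swap_apply_eq_iff, eq_comm (a := i)]
  rw [h]
  exact IsSymm.add (by simp [IsSymm]) (transpose_single i i c)

theorem fromBlocks_inv_transpose_mem_symmUnipotentClosure {A : Matrix l l K}
    (hA : IsUnit A.det) : fromBlocks A 0 0 (A⁻¹)ᵀ ∈ symmUnipotentClosure l K := by
  refine diagonal_transvection_induction_of_det_ne_zero
    (fun A ↦ fromBlocks A 0 0 (A⁻¹)ᵀ ∈ symmUnipotentClosure l K) A (isUnit_iff_ne_zero.mp hA)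
    (fun D hD ↦ ?_) (fun t ↦ ?_) (fun A B _ _ hA hB ↦ ?_)
  · simpa using fromBlocks_mul_inv_mem_symmUnipotentClosure (isSymm_diagonal D) isSymm_one
      (isUnit_iff_ne_zero.mpr hD) (by simp)
  · set P := (Equiv.swap t.i t.j).permMatrix K
    have hPP : P * P = 1 := by simp [P, ← permMatrix_mul]
    have hdP : IsUnit P.det := isUnit_det_of_right_inverse hPP
    have h := fromBlocks_mul_inv_mem_symmUnipotentClosure
      (isSymm_transvection_mul_swap t.i t.j t.c) (by simp [IsSymm, P])
      (by rwa [det_mul, det_transvection_of_ne _ _ t.hij, one_mul]) hdP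
    rwa [Matrix.mul_assoc, mul_nonsing_inv _ hdP, Matrix.mul_one] at h
  · convert mul_mem hA hB using 1
    simp [fromBlocks_multiply, Matrix.mul_inv_rev, transpose_mul]

theorem mem_symmUnipotentClosure_of_isUnit_det_toBlocks₁₁ {M : Matrix (l ⊕ l) (l ⊕ l) K}
    (hM : M ∈ symplecticGroup l K) (hA : IsUnit M.toBlocks₁₁.det) :
    M ∈ symmUnipotentClosure l K := by
  rw [← fromBlocks_toBlocks M] at hM ⊢
  set A := M.toBlocks₁₁
  obtain ⟨hAC, hAD⟩ := transpose_mul_eq_of_fromBlocks_mem_symplecticGroup hM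
  have hAB := mul_transpose_comm_of_fromBlocks_mem_symplecticGroup hM
  have hB : (A⁻¹ * M.toBlocks₁₂).IsSymm := by
    have := isSymm_mul_inv_of_transpose_mul_comm (A := Aᵀ) (C := M.toBlocks₁₂ᵀ)
      (by rwa [det_transpose]) (by simpa using hAB)
    simpa [← transpose_nonsing_inv, ← transpose_mul] using this.transpose
  rw [fromBlocks_eq_lower_mul_mul_upper hA hAC hAD]
  exact mul_mem (mul_mem
    (isSymm_mul_inv_of_transpose_mul_comm hA hAC).fromBlocks_lower_mem_symmUnipotentClosure
    (fromBlocks_inv_transpose_mem_symmUnipotentClosure hA))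
    hB.fromBlocks_upper_mem_symmUnipotentClosure

end Field

section Real

theorem exists_isUnit_det_add_smul {A B : Matrix l l ℝ} (hAB : A * Bᵀ = B * Aᵀ)
    (h : IsUnit (A * Aᵀ + B * Bᵀ).det) : ∃ t : ℝ, IsUnit (A + t • B).det := by
  set p := (A.map C + (X : ℝ[X]) • B.map C).det
  set a := A.map Complex.ofRealHom
  set b := B.map Complex.ofRealHom
  have hab : a * bᵀ = b * aᵀ := by
    simpa [a, b, Matrix.map_mul, transpose_map] using congrArg (·.map Complex.ofRealHom) hAB
  have hfactor : (a + Complex.I • b) * (a - Complex.I • b)ᵀ =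
      (A * Aᵀ + B * Bᵀ).map Complex.ofRealHom :=
    calc (a + Complex.I • b) * (a - Complex.I • b)ᵀ
        = a * aᵀ + Complex.I • (b * aᵀ - a * bᵀ) - (Complex.I * Complex.I) • (b * bᵀ) := by
          simp only [transpose_sub, transpose_smul, Matrix.add_mul, Matrix.mul_sub,
            Matrix.smul_mul, Matrix.mul_smul]
          module
      _ = a * aᵀ + b * bᵀ := by simp [hab]
      _ = (A * Aᵀ + B * Bᵀ).map Complex.ofRealHom := by
          simp [a, b, Matrix.map_mul, Matrix.map_add, transpose_map]
  have hI : p.eval₂ Complex.ofRealHom Complex.I ≠ 0 := by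
    rw [eval₂_det_add_X_smul]
    intro h0
    apply h.ne_zero
    have := congrArg det hfactor
    rw [det_mul, h0, zero_mul, ← RingHom.mapMatrix_apply, ← RingHom.map_det] at this
    simpa using this.symm
  obtain ⟨t, ht⟩ : ∃ t : ℝ, p.eval t ≠ 0 := by
    by_contra! h0
    have hp : p = 0 := Polynomial.funext (by simpa using h0)
    exact hI (by rw [hp]; simp)
  refine ⟨t, isUnit_iff_ne_zero.mpr ?_⟩
  simpa [p, eval, eval₂_det_add_X_smul] using ht

theorem isUnit_det_toBlocks₁₁_mul_transpose {m n : Type*} [Fintype m] [Fintype n]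
    [DecidableEq m] [DecidableEq n] {M : Matrix (m ⊕ n) (m ⊕ n) ℝ} (hM : IsUnit M.det) :
    IsUnit (M * Mᵀ).toBlocks₁₁.det := by
  have hpos : (M * Mᵀ).PosDef := by
    simpa [star_eq_conjTranspose] using
      ((isUnit_iff_isUnit_det M).mpr hM).posDef_star_right_conjugate_iff.mpr PosDef.one
  exact (isUnit_iff_isUnit_det _).mp (hpos.submatrix Sum.inl_injective).isUnit

theorem symplecticGroup_le_symmUnipotentClosure :
    symplecticGroup l ℝ ≤ symmUnipotentClosure l ℝ := by
  intro M hM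
  obtain ⟨t, ht⟩ : ∃ t : ℝ, IsUnit (M.toBlocks₁₁ + t • M.toBlocks₁₂).det := by
    rw [← fromBlocks_toBlocks M] at hM
    refine exists_isUnit_det_add_smul (mul_transpose_comm_of_fromBlocks_mem_symplecticGroup hM) ?_
    simpa [fromBlocks_transpose, fromBlocks_multiply] using
      isUnit_det_toBlocks₁₁_mul_transpose (SymplecticGroup.symplectic_det hM)
  have hx : (t • 1 : Matrix l l ℝ).IsSymm := by simp [IsSymm]
  have hsplit : M = M * fromBlocks 1 0 (t • 1) 1 * fromBlocks 1 0 (-(t • 1)) 1 := by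
    simp [Matrix.mul_assoc, fromBlocks_multiply]
  rw [hsplit]
  refine mul_mem (mem_symmUnipotentClosure_of_isUnit_det_toBlocks₁₁
    (mul_mem hM hx.fromBlocks_lower_mem_symplecticGroup) ?_)
    hx.neg.fromBlocks_lower_mem_symmUnipotentClosure
  rw [← fromBlocks_toBlocks M]
  simpa [fromBlocks_multiply, add_comm] using ht

end Real

end Matrix

/-- The real symplectic group `Sp(2g, ℝ)` is generated by the subgroups
`N₊ = { [[1, x],[0, 1]] : x symmetric }` and `N₋ = { [[1, 0],[x, 1]] : x symmetric }`. -/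
theorem sp_generated_by_unipotents (g : ℕ) :
    Subgroup.closure
      {M : Matrix.symplecticGroup (Fin g) ℝ |
        ∃ x : Matrix (Fin g) (Fin g) ℝ, x.IsSymm ∧
          ((M : Matrix (Fin g ⊕ Fin g) (Fin g ⊕ Fin g) ℝ) = Matrix.fromBlocks 1 x 0 1 ∨
           (M : Matrix (Fin g ⊕ Fin g) (Fin g ⊕ Fin g) ℝ) = Matrix.fromBlocks 1 0 x 1)} = ⊤ := by
  rw [eq_top_iff]
  rintro M -
  generalize hG : Subgroup.closure (G := symplecticGroup (Fin g) ℝ) _ = G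
  have hle : symmUnipotentClosure (Fin g) ℝ ≤
      G.toSubmonoid.map (symplecticGroup (Fin g) ℝ).subtype := by
    refine Submonoid.closure_le.mpr ?_
    rintro _ ⟨x, hx, rfl | rfl⟩
    · exact ⟨⟨_, hx.fromBlocks_upper_mem_symplecticGroup⟩,
        hG ▸ Subgroup.subset_closure ⟨x, hx, .inl rfl⟩, rfl⟩
    · exact ⟨⟨_, hx.fromBlocks_lower_mem_symplecticGroup⟩,
        hG ▸ Subgroup.subset_closure ⟨x, hx, .inr rfl⟩, rfl⟩
  obtain ⟨N, hN, hNM⟩ := hle (symplecticGroup_le_symmUnipotentClosure M.2)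
  exact Subtype.ext hNM ▸ hN
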